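/- Suppose the constraints are linear and homogeneous with time-independent coefficients: α_ν(q,v,t) = ∑_{r=1}^m a_{ν,r}(q) v_r with a_{ν,r} C², and suppose the Lagrangian is time-independent: (∂L/∂t)(q,u,t) = 0 for all (q,u,t). Then ᾱ_ν = α_ν for every ν, and along every C² curve satisfying the constraints and solving the Voronec equations the energy E*(q(t),v(t),t) is constant in t. -/

import Mathlib

open scoped BigOperators
noncomputable section
namespace NH

/-- The phase point `(q, v, t)` with `q : ℝⁿ` (n = m+k) and independent velocities `v : ℝᵐ`. -/
abbrev Pt (m k : ℕ) : Type := (Fin (m+k) → ℝ) × (Fin m → ℝ) × ℝ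

/-- The full phase point `(q, u, t)` with all velocities `u : ℝⁿ`. -/
abbrev PtL (m k : ℕ) : Type := (Fin (m+k) → ℝ) × (Fin (m+k) → ℝ) × ℝ

/-- Partial derivative of `f (q, w, t)` with respect to `q_i`. -/
def pq {n m' : ℕ} (f : (Fin n → ℝ) × (Fin m' → ℝ) × ℝ → ℝ) (i : Fin n)
    (x : (Fin n → ℝ) × (Fin m' → ℝ) × ℝ) : ℝ :=
  fderiv ℝ f x (Pi.single i 1, 0, 0)

/-- Partial derivative of `f (q, w, t)` with respect to the velocity variable `w_j`. -/
def pv {n m' : ℕ} (f : (Fin n → ℝ) × (Fin m' → ℝ) × ℝ → ℝ) (j : Fin m')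
    (x : (Fin n → ℝ) × (Fin m' → ℝ) × ℝ) : ℝ :=
  fderiv ℝ f x (0, Pi.single j 1, 0)

/-- Partial derivative of `f (q, w, t)` with respect to time `t`. -/
def pt {n m' : ℕ} (f : (Fin n → ℝ) × (Fin m' → ℝ) × ℝ → ℝ)
    (x : (Fin n → ℝ) × (Fin m' → ℝ) × ℝ) : ℝ :=
  fderiv ℝ f x (0, 0, 1)

/-- Partial derivative of `U (q, t)` with respect to `q_i`. -/
def pUq {n : ℕ} (U : (Fin n → ℝ) × ℝ → ℝ) (i : Fin n) (x : (Fin n → ℝ) × ℝ) : ℝ :=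
  fderiv ℝ U x (Pi.single i 1, 0)

/-- Partial derivative of `U (q, t)` with respect to `t`. -/
def pUt {n : ℕ} (U : (Fin n → ℝ) × ℝ → ℝ) (x : (Fin n → ℝ) × ℝ) : ℝ :=
  fderiv ℝ U x (0, 1)

variable {m k : ℕ}

/-- `û(q,v,t) = (v₁,…,vₘ, α₁(q,v,t),…,α_k(q,v,t))`. -/
def uhat (α : Fin k → Pt m k → ℝ) (x : Pt m k) : Fin (m+k) → ℝ :=
  Fin.append x.2.1 (fun ν => α ν x)

/-- The full phase point `(q, û(q,v,t), t)` associated to `(q,v,t)`. -/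
def Lpt (α : Fin k → Pt m k → ℝ) (x : Pt m k) : PtL m k :=
  (x.1, uhat α x, x.2.2)

/-- The restricted Lagrangian `L*(q,v,t) = L(q, û(q,v,t), t)`. -/
def Lstar (L : PtL m k → ℝ) (α : Fin k → Pt m k → ℝ) (x : Pt m k) : ℝ :=
  L (Lpt α x)

/-- `ᾱ_ν(q,v,t) = ∑_r v_r ∂α_ν/∂v_r`. -/
def abar (α : Fin k → Pt m k → ℝ) (ν : Fin k) (x : Pt m k) : ℝ :=
  ∑ r : Fin m, x.2.1 r * pv (α ν) r x

/-- The restricted energy `E*(q,v,t) = ∑_r v_r ∂L*/∂v_r − L*`. -/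
def Estar (L : PtL m k → ℝ) (α : Fin k → Pt m k → ℝ) (x : Pt m k) : ℝ :=
  ∑ r : Fin m, x.2.1 r * pv (Lstar L α) r x - Lstar L α x

/-- The energy `E(q,v,t) = ∑_i û_i (∂L/∂u_i)(q,û,t) − L*(q,v,t)`. -/
def En (L : PtL m k → ℝ) (α : Fin k → Pt m k → ℝ) (x : Pt m k) : ℝ :=
  ∑ i : Fin (m+k), uhat α x i * pv L i (Lpt α x) - Lstar L α x

/-- `q̇_i(t)`. -/
def qdot {n : ℕ} (q : ℝ → Fin n → ℝ) (t : ℝ) (i : Fin n) : ℝ :=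
  deriv (fun s => q s i) t

/-- The independent velocities `v(t) = (q̇₁,…,q̇ₘ)` along a curve. -/
def vel (m k : ℕ) (q : ℝ → Fin (m+k) → ℝ) (t : ℝ) (r : Fin m) : ℝ :=
  qdot q t (Fin.castAdd k r)

/-- The point `(q(t), v(t), t)` along a curve. -/
def along (m k : ℕ) (q : ℝ → Fin (m+k) → ℝ) (t : ℝ) : Pt m k :=
  (q t, vel m k q t, t)

/-- The curve satisfies the nonholonomic constraints: `q̇_{m+ν} = α_ν(q, v, t)`. -/
def Constrained (α : Fin k → Pt m k → ℝ) (q : ℝ → Fin (m+k) → ℝ) : Prop :=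
  ∀ (t : ℝ) (ν : Fin k), qdot q t (Fin.natAdd m ν) = α ν (along m k q t)

/-- The Voronec coefficients `B_rν(t)` along a constrained curve. -/
def Bco (α : Fin k → Pt m k → ℝ) (q : ℝ → Fin (m+k) → ℝ) (r : Fin m) (ν : Fin k) (t : ℝ) : ℝ :=
  deriv (fun s => pv (α ν) r (along m k q s)) t
    - pq (α ν) (Fin.castAdd k r) (along m k q t)
    - ∑ μ : Fin k, pv (α μ) r (along m k q t) * pq (α ν) (Fin.natAdd m μ) (along m k q t)

/-- The Voronec equations of motion along a constrained curve. -/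
def Voronec (L : PtL m k → ℝ) (α : Fin k → Pt m k → ℝ) (q : ℝ → Fin (m+k) → ℝ) : Prop :=
  ∀ (r : Fin m) (t : ℝ),
    deriv (fun s => pv (Lstar L α) r (along m k q s)) t
      - pq (Lstar L α) (Fin.castAdd k r) (along m k q t)
      - ∑ ν : Fin k, pq (Lstar L α) (Fin.natAdd m ν) (along m k q t) * pv (α ν) r (along m k q t)
      - ∑ ν : Fin k, Bco α q r ν t * pv L (Fin.natAdd m ν) (Lpt α (along m k q t)) = 0

/-!
Along a constrained curve, differentiating `E*` and inserting the Voronec equations gives the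
energy balance
`dE*/dt = ∑_ν ∂L*/∂q_{m+ν} (ᾱ_ν - α_ν) + ∑_ν ∂L/∂u_{m+ν} ∑_r v_r B_rν - ∂L*/∂t`.
For `α_ν = ∑_r a_{ν,r}(q) v_r` every term vanishes: `ᾱ_ν = α_ν` is Euler's relation, `∂L*/∂t = 0`
since neither `L` nor `û` depends on `t`, and in `∑_r v_r B_rν` both the time-derivative term and
the `q`-derivative terms equal `∑_r v_r Da_{ν,r}(q) q̇` once `q̇ = û` and `ᾱ = α` are used.
-/

section Partials

variable {n m' : ℕ}

theorem fderiv_apply_eq_sum_partials (f : (Fin n → ℝ) × (Fin m' → ℝ) × ℝ → ℝ)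
    (x : (Fin n → ℝ) × (Fin m' → ℝ) × ℝ) (w : Fin n → ℝ) (z : Fin m' → ℝ) (s : ℝ) :
    fderiv ℝ f x (w, z, s) = ∑ i, w i * pq f i x + ∑ j, z j * pv f j x + s * pt f x := by
  have hdecomp : ((w, z, s) : (Fin n → ℝ) × (Fin m' → ℝ) × ℝ)
      = ∑ i, w i • ((Pi.single i 1, 0, 0) : (Fin n → ℝ) × (Fin m' → ℝ) × ℝ)
        + ∑ j, z j • ((0, Pi.single j 1, 0) : (Fin n → ℝ) × (Fin m' → ℝ) × ℝ)
        + s • ((0, 0, 1) : (Fin n → ℝ) × (Fin m' → ℝ) × ℝ) := by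
    ext <;> simp [Prod.fst_sum, Prod.snd_sum, Finset.sum_apply, Pi.single_apply]
  rw [hdecomp]
  simp only [map_add, map_sum, map_smul, smul_eq_mul, pq, pv, pt]

theorem hasDerivAt_comp_of_partials {f : (Fin n → ℝ) × (Fin m' → ℝ) × ℝ → ℝ}
    {γ : ℝ → (Fin n → ℝ) × (Fin m' → ℝ) × ℝ} {γ' : (Fin n → ℝ) × (Fin m' → ℝ) × ℝ} {t : ℝ}
    (hγ : HasDerivAt γ γ' t) (hf : DifferentiableAt ℝ f (γ t)) :
    HasDerivAt (fun s => f (γ s))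
      (∑ i, γ'.1 i * pq f i (γ t) + ∑ j, γ'.2.1 j * pv f j (γ t) + γ'.2.2 * pt f (γ t)) t := by
  rw [← fderiv_apply_eq_sum_partials]
  exact hf.hasFDerivAt.comp_hasDerivAt t hγ

theorem sum_mul_pq (f : (Fin n → ℝ) × (Fin m' → ℝ) × ℝ → ℝ)
    (x : (Fin n → ℝ) × (Fin m' → ℝ) × ℝ) (w : Fin n → ℝ) :
    ∑ i, w i * pq f i x = fderiv ℝ f x (w, 0, 0) := by
  simp [fderiv_apply_eq_sum_partials]

end Partials

section VelocityLinear

variable {n m' : ℕ} {a : Fin m' → (Fin n → ℝ) → ℝ} {f : (Fin n → ℝ) × (Fin m' → ℝ) × ℝ → ℝ}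

theorem fderiv_apply_of_velocity_linear (ha : ∀ r, Differentiable ℝ (a r))
    (hf : ∀ x, f x = ∑ r, a r x.1 * x.2.1 r) (x : (Fin n → ℝ) × (Fin m' → ℝ) × ℝ)
    (w : Fin n → ℝ) (z : Fin m' → ℝ) (s : ℝ) :
    fderiv ℝ f x (w, z, s) = ∑ r, (a r x.1 * z r + x.2.1 r * fderiv ℝ (a r) x.1 w) := by
  let velocity : ((Fin n → ℝ) × (Fin m' → ℝ) × ℝ) →L[ℝ] (Fin m' → ℝ) :=
    (ContinuousLinearMap.fst ℝ _ ℝ).comp (ContinuousLinearMap.snd ℝ _ _)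
  have hvelocity (r : Fin m') : HasFDerivAt (fun y : (Fin n → ℝ) × (Fin m' → ℝ) × ℝ => y.2.1 r)
      ((ContinuousLinearMap.proj r).comp velocity) x :=
    ((ContinuousLinearMap.proj r).comp velocity).hasFDerivAt
  have hderiv : HasFDerivAt f (∑ r, (a r x.1 • (ContinuousLinearMap.proj r).comp velocity
      + x.2.1 r • (fderiv ℝ (a r) x.1).comp (ContinuousLinearMap.fst ℝ _ _))) x := by
    rw [show f = fun y => ∑ r, a r y.1 * y.2.1 r from funext hf]
    exact HasFDerivAt.fun_sum (u := Finset.univ) fun r _ =>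
      ((ha r x.1).hasFDerivAt.comp x hasFDerivAt_fst).mul (hvelocity r)
  rw [hderiv.fderiv]
  simp [velocity]

theorem pv_of_velocity_linear (ha : ∀ r, Differentiable ℝ (a r))
    (hf : ∀ x, f x = ∑ r, a r x.1 * x.2.1 r) (j : Fin m') (x : (Fin n → ℝ) × (Fin m' → ℝ) × ℝ) :
    pv f j x = a j x.1 := by
  simp [pv, fderiv_apply_of_velocity_linear ha hf, Pi.single_apply]

end VelocityLinear

theorem abar_eq_of_velocity_linear {α : Fin k → Pt m k → ℝ}
    {a : Fin k → Fin m → (Fin (m+k) → ℝ) → ℝ} (ha : ∀ ν r, Differentiable ℝ (a ν r))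
    (hαdef : ∀ (ν : Fin k) (x : Pt m k), α ν x = ∑ r : Fin m, a ν r x.1 * x.2.1 r)
    (ν : Fin k) (x : Pt m k) : abar α ν x = α ν x := by
  simp only [abar, pv_of_velocity_linear (ha ν) (hαdef ν), hαdef ν x, mul_comm]

theorem sum_uhat_mul (α : Fin k → Pt m k → ℝ) (x : Pt m k) (g : Fin (m+k) → ℝ) :
    ∑ i, uhat α x i * g i
      = ∑ r, x.2.1 r * g (Fin.castAdd k r) + ∑ ν, α ν x * g (Fin.natAdd m ν) := by
  simp [Fin.sum_univ_add, uhat]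

theorem contDiff_Lstar {L : PtL m k → ℝ} {α : Fin k → Pt m k → ℝ}
    (hL : ContDiff ℝ 2 L) (hα : ∀ ν, ContDiff ℝ 2 (α ν)) : ContDiff ℝ 2 (Lstar L α) := by
  refine hL.comp (contDiff_fst.prodMk (ContDiff.prodMk ?_ (contDiff_snd.comp contDiff_snd)))
  refine contDiff_pi.mpr fun i => ?_
  induction i using Fin.addCases with
  | left r => simpa [uhat] using contDiff_pi.mp (contDiff_fst.comp contDiff_snd) r
  | right ν => simpa [uhat] using hα ν

theorem pt_Lstar_eq_pt {L : PtL m k → ℝ} {α : Fin k → Pt m k → ℝ} {x : Pt m k}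
    (hL : DifferentiableAt ℝ L (Lpt α x)) (hLstar : DifferentiableAt ℝ (Lstar L α) x)
    (hα : ∀ ν (s : ℝ), α ν (x + (0, 0, s)) = α ν x) :
    pt (Lstar L α) x = pt L (Lpt α x) := by
  have hline (s : ℝ) : Lpt α (x + s • (0, 0, 1)) = Lpt α x + s • (0, 0, 1) := by
    simp [Lpt, uhat, hα]
  rw [pt, pt, ← hLstar.lineDeriv_eq_fderiv, ← hL.lineDeriv_eq_fderiv]
  simp only [lineDeriv, Lstar, hline]

section Curves

variable {q : ℝ → Fin (m+k) → ℝ}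

theorem along_snd_fst (t : ℝ) : (along m k q t).2.1 = vel m k q t := rfl

theorem Constrained.qdot_eq_uhat {α : Fin k → Pt m k → ℝ} (hq : Constrained α q) (t : ℝ) :
    qdot q t = uhat α (along m k q t) := by
  funext i
  induction i using Fin.addCases with
  | left r => simp [uhat, along, vel]
  | right ν => simp [uhat, hq t ν]

theorem contDiff_vel (hq : ContDiff ℝ 2 q) : ContDiff ℝ 1 (vel m k q) :=
  contDiff_pi.mpr fun r =>
    ((contDiff_succ_iff_deriv (n := 1)).mp (contDiff_pi.mp hq (Fin.castAdd k r))).2.2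

theorem hasDerivAt_qdot {t : ℝ} (hq : DifferentiableAt ℝ q t) : HasDerivAt q (qdot q t) t :=
  hasDerivAt_pi.mpr fun i => (differentiableAt_pi.mp hq i).hasDerivAt

theorem hasDerivAt_along (hq : ContDiff ℝ 2 q) (t : ℝ) :
    HasDerivAt (along m k q) (qdot q t, deriv (vel m k q) t, 1) t :=
  (hasDerivAt_qdot ((hq.differentiable two_ne_zero) t)).prodMk
    ((((contDiff_vel hq).differentiable one_ne_zero) t).hasDerivAt.prodMk (hasDerivAt_id t))

theorem Constrained.hasDerivAt_Estar_along {L : PtL m k → ℝ} {α : Fin k → Pt m k → ℝ}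
    (hcon : Constrained α q) (hLstar : ContDiff ℝ 2 (Lstar L α)) (hq : ContDiff ℝ 2 q) (t : ℝ) :
    HasDerivAt (fun s => Estar L α (along m k q s))
      (∑ r, vel m k q t r * (deriv (fun s => pv (Lstar L α) r (along m k q s)) t
          - pq (Lstar L α) (Fin.castAdd k r) (along m k q t))
        - ∑ ν, α ν (along m k q t) * pq (Lstar L α) (Fin.natAdd m ν) (along m k q t)
        - pt (Lstar L α) (along m k q t)) t := by
  have hvel : ∀ r, HasDerivAt (fun s => vel m k q s r) (deriv (vel m k q) t r) t :=
    hasDerivAt_pi.mp (((contDiff_vel hq).differentiable one_ne_zero) t).hasDerivAt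
  have hmomentum (r : Fin m) : HasDerivAt (fun s => pv (Lstar L α) r (along m k q s))
      (deriv (fun s => pv (Lstar L α) r (along m k q s)) t) t := by
    have hpv : ContDiff ℝ 1 (pv (Lstar L α) r) :=
      (hLstar.fderiv_right (by norm_num)).clm_apply contDiff_const
    exact ((hpv.differentiable one_ne_zero).differentiableAt.fun_comp' t
      (hasDerivAt_along hq t).differentiableAt).hasDerivAt
  have hLag := hasDerivAt_comp_of_partials (hasDerivAt_along hq t)
    ((hLstar.differentiable two_ne_zero) _)
  have hE := (HasDerivAt.fun_sum (u := Finset.univ) fun r _ =>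
    (hvel r).fun_mul (hmomentum r)).sub hLag
  refine HasDerivAt.congr_deriv (f := fun s => Estar L α (along m k q s)) hE ?_
  simp only [hcon.qdot_eq_uhat, sum_uhat_mul, along_snd_fst, one_mul, Finset.sum_add_distrib,
    mul_sub, Finset.sum_sub_distrib]
  ring

theorem Voronec.hasDerivAt_Estar_along {L : PtL m k → ℝ} {α : Fin k → Pt m k → ℝ}
    (hV : Voronec L α q) (hLstar : ContDiff ℝ 2 (Lstar L α)) (hq : ContDiff ℝ 2 q)
    (hcon : Constrained α q) (t : ℝ) :
    HasDerivAt (fun s => Estar L α (along m k q s))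
      (∑ ν, pq (Lstar L α) (Fin.natAdd m ν) (along m k q t)
          * (abar α ν (along m k q t) - α ν (along m k q t))
        + ∑ ν, pv L (Fin.natAdd m ν) (Lpt α (along m k q t)) * ∑ r, vel m k q t r * Bco α q r ν t
        - pt (Lstar L α) (along m k q t)) t := by
  refine (hcon.hasDerivAt_Estar_along hLstar hq t).congr_deriv ?_
  have hmotion (r : Fin m) : deriv (fun s => pv (Lstar L α) r (along m k q s)) t
      - pq (Lstar L α) (Fin.castAdd k r) (along m k q t)
      = ∑ ν, pq (Lstar L α) (Fin.natAdd m ν) (along m k q t) * pv (α ν) r (along m k q t)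
        + ∑ ν, Bco α q r ν t * pv L (Fin.natAdd m ν) (Lpt α (along m k q t)) := by
    linarith [hV r t]
  have hswap (g : Fin m → Fin k → ℝ) : ∑ r, ∑ ν, g r ν = ∑ ν, ∑ r, g r ν := Finset.sum_comm
  simp only [hmotion, abar, along_snd_fst, mul_add, Finset.mul_sum, mul_sub, Finset.sum_add_distrib,
    Finset.sum_sub_distrib, hswap]
  simp only [mul_comm, mul_left_comm, mul_assoc]
  ring

theorem Constrained.sum_vel_mul_Bco_eq_zero {α : Fin k → Pt m k → ℝ}
    {a : Fin k → Fin m → (Fin (m+k) → ℝ) → ℝ} (hcon : Constrained α q)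
    (ha : ∀ ν r, Differentiable ℝ (a ν r))
    (hαdef : ∀ (ν : Fin k) (x : Pt m k), α ν x = ∑ r : Fin m, a ν r x.1 * x.2.1 r)
    (hq : Differentiable ℝ q) (ν : Fin k) (t : ℝ) :
    ∑ r, vel m k q t r * Bco α q r ν t = 0 := by
  have hdt (r : Fin m) : deriv (fun s => pv (α ν) r (along m k q s)) t
      = fderiv ℝ (a ν r) (q t) (uhat α (along m k q t)) := by
    simp only [pv_of_velocity_linear (ha ν) (hαdef ν), ← hcon.qdot_eq_uhat]
    exact ((ha ν r (q t)).hasFDerivAt.comp_hasDerivAt t (hasDerivAt_qdot (hq t))).deriv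
  have hdq : ∑ r, vel m k q t r * pq (α ν) (Fin.castAdd k r) (along m k q t)
      + ∑ μ, α μ (along m k q t) * pq (α ν) (Fin.natAdd m μ) (along m k q t)
      = ∑ r, vel m k q t r * fderiv ℝ (a ν r) (q t) (uhat α (along m k q t)) := by
    rw [← along_snd_fst, ← sum_uhat_mul α _ fun i => pq (α ν) i (along m k q t), sum_mul_pq,
      fderiv_apply_of_velocity_linear (ha ν) (hαdef ν)]
    simp [along]
  have hconstraint : ∑ r, vel m k q t r * ∑ μ, pv (α μ) r (along m k q t)
        * pq (α ν) (Fin.natAdd m μ) (along m k q t)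
      = ∑ μ, α μ (along m k q t) * pq (α ν) (Fin.natAdd m μ) (along m k q t) := by
    simp only [← abar_eq_of_velocity_linear ha hαdef, abar, along_snd_fst, Finset.mul_sum,
      Finset.sum_mul]
    rw [Finset.sum_comm]
    simp only [mul_assoc]
  simp only [Bco, hdt, mul_sub, Finset.sum_sub_distrib]
  linarith

end Curves

theorem linear_homogeneous_energy_conservation_general (m k : ℕ)
    (L : PtL m k → ℝ) (hL : ContDiff ℝ 2 L)
    (α : Fin k → Pt m k → ℝ) (hα : ∀ ν, ContDiff ℝ 2 (α ν))
    (a : Fin k → Fin m → (Fin (m+k) → ℝ) → ℝ) (ha : ∀ ν r, ContDiff ℝ 2 (a ν r))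
    (hαdef : ∀ (ν : Fin k) (x : Pt m k), α ν x = ∑ r : Fin m, a ν r x.1 * x.2.1 r)
    (hLt : ∀ x : PtL m k, pt L x = 0) :
    (∀ (ν : Fin k) (x : Pt m k), abar α ν x = α ν x)
    ∧ (∀ (q : ℝ → Fin (m+k) → ℝ), ContDiff ℝ 2 q → Constrained α q → Voronec L α q →
        ∀ t₁ t₂ : ℝ, Estar L α (along m k q t₁) = Estar L α (along m k q t₂)) := by
  have ha' : ∀ ν r, Differentiable ℝ (a ν r) := fun ν r => (ha ν r).differentiable two_ne_zero
  have habar := abar_eq_of_velocity_linear ha' hαdef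
  have hLstar := contDiff_Lstar hL hα
  have hpt (x : Pt m k) : pt (Lstar L α) x = 0 := by
    rw [pt_Lstar_eq_pt (hL.differentiable two_ne_zero _) (hLstar.differentiable two_ne_zero x)
      fun ν s => by simp [hαdef], hLt]
  refine ⟨habar, fun q hq hcon hV => ?_⟩
  have hconst (t : ℝ) : HasDerivAt (fun s => Estar L α (along m k q s)) 0 t := by
    simpa [habar, hcon.sum_vel_mul_Bco_eq_zero ha' hαdef (hq.differentiable two_ne_zero), hpt]
      using hV.hasDerivAt_Estar_along hLstar hq hcon t
  exact is_const_of_deriv_eq_zero (fun t => (hconst t).differentiableAt) fun t => (hconst t).deriv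

theorem linear_homogeneous_energy_conservation (m k : ℕ) (hm : 0 < m) (hk : 0 < k)
    (L : PtL m k → ℝ) (hL : ContDiff ℝ 2 L)
    (α : Fin k → Pt m k → ℝ) (hα : ∀ ν, ContDiff ℝ 2 (α ν))
    (a : Fin k → Fin m → (Fin (m+k) → ℝ) → ℝ) (ha : ∀ ν r, ContDiff ℝ 2 (a ν r))
    (hαdef : ∀ (ν : Fin k) (x : Pt m k), α ν x = ∑ r : Fin m, a ν r x.1 * x.2.1 r)
    (hLt : ∀ x : PtL m k, pt L x = 0) :
    (∀ (ν : Fin k) (x : Pt m k), abar α ν x = α ν x)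
    ∧ (∀ (q : ℝ → Fin (m+k) → ℝ), ContDiff ℝ 2 q → Constrained α q → Voronec L α q →
        ∀ t₁ t₂ : ℝ, Estar L α (along m k q t₁) = Estar L α (along m k q t₂)) :=
  linear_homogeneous_energy_conservation_general m k L hL α hα a ha hαdef hLt

end NH
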